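/- For every real number N > 1, the series Σ_{m=1}^{∞} 2 / (m(m+1)(m+2) · N^m) converges and its sum equals 3/2 − N − (N−1)² · log(1 − 1/N), where log denotes the natural logarithm. -/

import Mathlib

/-!
Put `x = 1/N`. The partial fractions `2/(k(k+1)(k+2)) = 1/k - 2/(k+1) + 1/(k+2)` split the
series into three shifted tails of `-log(1 - x) = ∑ xᵏ/k`, whose sums are explicit.
-/

open Finset

theorem hasSum_pow_div_log_tail {x : ℝ} (hx : |x| < 1) (k : ℕ) :
    HasSum (fun n : ℕ => x ^ (n + k + 1) / ((n : ℝ) + k + 1))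
      (-Real.log (1 - x) - ∑ i ∈ range k, x ^ (i + 1) / ((i : ℝ) + 1)) := by
  exact_mod_cast (hasSum_nat_add_iff' k).2 (Real.hasSum_pow_div_log_of_abs_lt_one hx)

theorem two_mul_pow_div_consecutive_eq {x : ℝ} (hx : x ≠ 0) (m : ℕ) :
    2 * x ^ (m + 1) / (((m : ℝ) + 1) * ((m : ℝ) + 2) * ((m : ℝ) + 3)) =
      x ^ (m + 1) / ((m : ℝ) + 1) - 2 / x * (x ^ (m + 2) / ((m : ℝ) + 2))
        + 1 / x ^ 2 * (x ^ (m + 3) / ((m : ℝ) + 3)) := by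
  field_simp
  ring

theorem hasSum_two_mul_pow_div_consecutive {x : ℝ} (hx : |x| < 1) (hx0 : x ≠ 0) :
    HasSum (fun m : ℕ => 2 * x ^ (m + 1) / (((m : ℝ) + 1) * ((m : ℝ) + 2) * ((m : ℝ) + 3)))
      (3 / 2 - 1 / x - (1 / x - 1) ^ 2 * Real.log (1 - x)) := by
  convert ((hasSum_pow_div_log_tail hx 0).sub ((hasSum_pow_div_log_tail hx 1).mul_left (2 / x))).add
    ((hasSum_pow_div_log_tail hx 2).mul_left (1 / x ^ 2)) using 1
  · rfl
  · funext m
    rw [two_mul_pow_div_consecutive_eq hx0]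
    push_cast
    ring
  · simp only [sum_range_succ, sum_range_zero]
    field_simp
    ring

theorem series_hypergeometric_derivative (N : ℝ) (hN : 1 < N) :
    HasSum
      (fun m : ℕ =>
        2 / (((m : ℝ) + 1) * ((m : ℝ) + 2) * ((m : ℝ) + 3) * N ^ (m + 1)))
      (3 / 2 - N - (N - 1) ^ 2 * Real.log (1 - 1 / N)) := by
  have hx : |1 / N| < 1 := by
    rw [abs_of_pos (by positivity), div_lt_one (by positivity)]
    exact hN
  convert hasSum_two_mul_pow_div_consecutive hx (by positivity) using 1
  · funext m
    rw [one_div_pow, mul_one_div, div_div, mul_comm (N ^ (m + 1))]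
  · rw [one_div_one_div]
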